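/- arXiv:1804.06322 — 3 statements merged into one kernel-verified Lean document; each statement's English description precedes it below -/
import Mathlib

section
/- Let F be a finitely generated free profinite group of finite rank at least 2, and let N be an open normal subgroup of F. If α is a continuous automorphism of F that restricts to the identity on N, then α is the identity automorphism of F. -/
/-- `F` is a free profinite group of rank `n`: it is a profinite group together with `n`
topological generators satisfying the universal lifting property with respect to (discrete)
finite groups. -/
def IsFreeProfiniteOfRank (F : Type) [Group F] [TopologicalSpace F] (n : ℕ) : Prop :=
  CompactSpace F ∧ T2Space F ∧ TotallyDisconnectedSpace F ∧
  ∃ x : Fin n → F,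
    ∀ (H : Type) [Group H] [Finite H] (g : Fin n → H),
      ∃! φ : F →* H, (∀ s : Set H, IsOpen (φ ⁻¹' s)) ∧ ∀ i, φ (x i) = g i

/-!
Suppose `α x₀ ≠ x₀`. Then `c = x₀⁻¹ α(x₀) ≠ 1` centralizes `N`, so there is an open normal
`V ≤ N` with `c ∉ V`. Put `Q = F/V` and send the generator `xᵢ` to `(e_{1,i}, xᵢV)` in the
wreath product `𝔽₂ⁿ ≀ Q`, whose base is the `𝔽₂`-space `Q → 𝔽₂ⁿ` of dimension `n|Q|`.
Elements of `V` land in the base and commute with the image of `c`, so their base vectors are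
invariant under translation by `cV ≠ 1`; such vectors form a subspace of dimension at most
`n|Q|/2`. For a transversal `g ↦ y_g` with `y_1 = 1`, the base vector of the Schreier element
`y_g xᵢ y_{g xᵢ}⁻¹ ∈ V` is `e_{g,i}` plus the base vector of `y_g` minus that of `y_{g xᵢ}`.
So the whole base is spanned by the invariant subspace and `|Q| - 1` further vectors, and
`n|Q| ≤ n|Q|/2 + |Q| - 1` forces `n ≤ 1`.
-/

open Module Submodule RegularWreathProduct

section TranslationInvariant

variable (K E : Type*) [Field K] [AddCommGroup E] [Module K E] {Q : Type*} [Group Q]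

def translationInvariant (H : Subgroup Q) : Submodule K (Q → E) where
  carrier := {m | ∀ h ∈ H, ∀ x, m (h * x) = m x}
  add_mem' hm hm' h hh x := by simp [hm h hh x, hm' h hh x]
  zero_mem' _ _ _ := rfl
  smul_mem' a m hm h hh x := by simp [hm h hh x]

variable {K E}

theorem translationInvariant_le_range_funLeft (H : Subgroup Q) :
    translationInvariant K E H ≤
      LinearMap.range (LinearMap.funLeft K E (Quotient.mk (QuotientGroup.rightRel H))) := by
  intro m hm
  refine ⟨Quotient.lift m fun a b hab => ?_, rfl⟩
  have hba : b * a⁻¹ ∈ H := QuotientGroup.rightRel_apply.mp hab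
  simpa using (hm _ hba a).symm

theorem finrank_translationInvariant_mul_card_le [Finite Q] [FiniteDimensional K E]
    (H : Subgroup Q) :
    finrank K (translationInvariant K E H) * Nat.card H ≤ Nat.card Q * finrank K E := by
  classical
  have := Fintype.ofFinite Q
  let O := Quotient (QuotientGroup.rightRel H)
  let ρ := LinearMap.funLeft K E (Quotient.mk (QuotientGroup.rightRel H))
  have hρ : Function.Injective ρ :=
    LinearMap.funLeft_injective_of_surjective K E _ Quotient.mk_surjective
  have hle : finrank K (translationInvariant K E H) ≤ Nat.card O * finrank K E :=
    calc finrank K (translationInvariant K E H)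
        ≤ finrank K (LinearMap.range ρ) :=
          Submodule.finrank_mono (translationInvariant_le_range_funLeft H)
      _ = Nat.card O * finrank K E := by
          rw [LinearMap.finrank_range_of_inj hρ, Module.finrank_pi_fintype, Finset.sum_const,
            Finset.card_univ, smul_eq_mul, Nat.card_eq_fintype_card]
  have hQ : Nat.card Q = Nat.card O * Nat.card H := by
    rw [Subgroup.card_eq_card_quotient_mul_card_subgroup H,
      Nat.card_congr (QuotientGroup.quotientRightRelEquivQuotientLeftRel H)]
  calc _ ≤ Nat.card O * finrank K E * Nat.card H := Nat.mul_le_mul_right _ hle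
    _ = Nat.card Q * finrank K E := by rw [hQ]; ring

end TranslationInvariant

theorem finrank_span_range_le_card_sub_one {K M ι : Type*} [Field K] [AddCommGroup M]
    [Module K M] [Fintype ι] [DecidableEq ι] {v : ι → M} {i : ι} (hv : v i = 0) :
    finrank K (span K (Set.range v)) ≤ Fintype.card ι - 1 := by
  let v' := fun j : {j // j ≠ i} => v j
  have hle : span K (Set.range v) ≤ span K (Set.range v') := by
    rw [span_le]
    rintro _ ⟨j, rfl⟩
    by_cases hj : j = i
    · subst hj; rw [hv]; exact zero_mem _
    · exact subset_span ⟨⟨j, hj⟩, rfl⟩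
  have := FiniteDimensional.span_of_finite K (Set.finite_range v')
  calc finrank K (span K (Set.range v))
      ≤ finrank K (span K (Set.range v')) := Submodule.finrank_mono hle
    _ ≤ Fintype.card {j // j ≠ i} := finrank_range_le_card _
    _ = Fintype.card ι - 1 := by simp [Fintype.card_subtype_compl]

theorem card_le_one_of_single_mem_translationInvariant_sup_span {K Q ι : Type*} [Field K]
    [Group Q] [Finite Q] [DecidableEq Q] [Finite ι] [DecidableEq ι] {c : Q} (hc : c ≠ 1)
    (τ : Q → Q → ι → K) (hτ : τ 1 = 0)
    (h : ∀ g i, Pi.single g (Pi.single i 1) ∈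
      translationInvariant K (ι → K) (Subgroup.zpowers c) ⊔ span K (Set.range τ)) :
    Nat.card ι ≤ 1 := by
  have := Fintype.ofFinite Q
  have := Fintype.ofFinite ι
  set L := translationInvariant K (ι → K) (Subgroup.zpowers c)
  have htop : ⊤ ≤ L ⊔ span K (Set.range τ) := by
    rw [← (Pi.basis fun _ : Q => Pi.basisFun K ι).span_eq, span_le]
    rintro _ ⟨⟨g, i⟩, rfl⟩
    simpa [Pi.basis_apply] using h g i
  have hdim : Nat.card Q * Nat.card ι ≤ finrank K L + (Nat.card Q - 1) :=
    calc Nat.card Q * Nat.card ι = finrank K (⊤ : Submodule K (Q → ι → K)) := by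
          simp [Module.finrank_pi_fintype, Nat.card_eq_fintype_card]
      _ ≤ finrank K (L ⊔ span K (Set.range τ) : Submodule K (Q → ι → K)) :=
          Submodule.finrank_mono htop
      _ ≤ finrank K L + finrank K (span K (Set.range τ)) :=
          Submodule.finrank_add_le_finrank_add_finrank _ _
      _ ≤ finrank K L + (Nat.card Q - 1) := by
          rw [Nat.card_eq_fintype_card]
          exact Nat.add_le_add_left (finrank_span_range_le_card_sub_one hτ) _
  have horder : 2 ≤ Nat.card (Subgroup.zpowers c) := by
    have := orderOf_pos c
    have := mt orderOf_eq_one_iff.mp hc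
    rw [Nat.card_zpowers]
    omega
  have hL : finrank K L * 2 ≤ Nat.card Q * Nat.card ι :=
    calc finrank K L * 2 ≤ finrank K L * Nat.card (Subgroup.zpowers c) :=
          Nat.mul_le_mul_left _ horder
      _ ≤ Nat.card Q * finrank K (ι → K) := finrank_translationInvariant_mul_card_le _
      _ = Nat.card Q * Nat.card ι := by simp [Nat.card_eq_fintype_card]
  have hQ : 0 < Nat.card Q := Nat.card_pos
  by_contra! hι
  have := Nat.mul_le_mul_left (Nat.card Q) hι
  omega

theorem inv_mul_apply_mem_centralizer {G : Type*} [Group G] {N : Subgroup G} [N.Normal]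
    (α : G →* G) (hα : ∀ x ∈ N, α x = x) (g : G) : g⁻¹ * α g ∈ Subgroup.centralizer N := by
  rw [Subgroup.mem_centralizer_iff]
  intro h hh
  have hconj := hα _ (Subgroup.Normal.conj_mem ‹_› h hh g)
  rw [map_mul, map_mul, map_inv, hα h hh] at hconj
  have key : α g * h = g * h * g⁻¹ * α g := by rw [← hconj]; group
  rw [mul_assoc g⁻¹, key]
  group

theorem MonoidHom.exists_rightInverse_map_one {G H : Type*} [Group G] [Group H] (f : G →* H)
    (hf : Function.Surjective f) : ∃ y : H → G, y 1 = 1 ∧ ∀ h, f (y h) = h :=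
  ⟨fun h => Function.surjInv hf h * (Function.surjInv hf 1)⁻¹, mul_inv_cancel _,
    fun h => by simp [Function.surjInv_eq hf]⟩

namespace RegularWreathProduct

variable {D Q : Type*} [Group Q]

theorem left_apply_mul_of_commute [CommGroup D] {a b : D ≀ᵣ Q} (hb : b.right = 1)
    (hab : Commute a b) (x : Q) : b.left (a.right * x) = b.left x := by
  have := congrArg (fun w => w.left (a.right * x)) hab.eq
  simp only [mul_left, hb, inv_one, one_mul, inv_mul_cancel_left, Pi.mul_apply] at this
  exact (mul_left_cancel (this.trans (mul_comm _ _))).symm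

theorem mul_mul_inv_left [Group D] {a b d : D ≀ᵣ Q} (hd : d.right = a.right * b.right) :
    (a * b * d⁻¹).left = a.left * (fun x => b.left (a.right⁻¹ * x)) * d.left⁻¹ := by
  ext x
  simp [hd, mul_assoc]

end RegularWreathProduct

section WreathRepresentation

variable {K ι Q : Type*} [Field K] [Group Q]

def wreathGen [DecidableEq ι] [DecidableEq Q] (q : Q) (i : ι) : Multiplicative (ι → K) ≀ᵣ Q :=
  ⟨fun x => Multiplicative.ofAdd ((Pi.single (1 : Q) (Pi.single i 1) : Q → ι → K) x), q⟩

def baseVector (w : Multiplicative (ι → K) ≀ᵣ Q) : Q → ι → K :=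
  fun x => Multiplicative.toAdd (w.left x)

variable [DecidableEq ι] [DecidableEq Q]

theorem baseVector_mul_wreathGen_mul_inv {a d : Multiplicative (ι → K) ≀ᵣ Q} {q : Q} {i : ι}
    (hd : d.right = a.right * q) :
    baseVector (a * wreathGen q i * d⁻¹) =
      baseVector a + Pi.single a.right (Pi.single i 1) - baseVector d := by
  ext x : 1
  rw [baseVector, mul_mul_inv_left hd]
  simp [baseVector, wreathGen, Pi.single_apply, inv_mul_eq_one, eq_comm (a := x), sub_eq_add_neg]

theorem card_le_one_of_mem_centralizer_ker [Finite Q] [Finite ι] {F : Type*} [Group F]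
    (π : F →* Q) (hπ : Function.Surjective π) (x : ι → F)
    (ψ : F →* Multiplicative (ι → K) ≀ᵣ Q) (hψπ : ∀ f, (ψ f).right = π f)
    (hψx : ∀ i, ψ (x i) = wreathGen (π (x i)) i)
    {c : F} (hc : c ∈ Subgroup.centralizer π.ker) (hπc : π c ≠ 1) : Nat.card ι ≤ 1 := by
  obtain ⟨y, hy1, hy⟩ := π.exists_rightInverse_map_one hπ
  let τ g := baseVector (ψ (y g))
  refine card_le_one_of_single_mem_translationInvariant_sup_span hπc τ
    (by ext; simp [τ, hy1, baseVector]) fun g i => ?_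
  set f := y g * x i * (y (g * π (x i)))⁻¹
  have hf : f ∈ π.ker := by simp [f, hy]
  have hf_invariant : baseVector (ψ f) ∈ translationInvariant K (ι → K) (Subgroup.zpowers (π c)) := by
    rintro _ hh z
    obtain ⟨k, rfl⟩ := Subgroup.mem_zpowers_iff.mp hh
    have hcomm : Commute (ψ (c ^ k)) (ψ f) :=
      Commute.map (Subgroup.mem_centralizer_iff.mp (Subgroup.zpow_mem _ hc k) f hf).symm ψ
    have := left_apply_mul_of_commute (by rw [hψπ, π.mem_ker.mp hf]) hcomm z
    rw [hψπ, map_zpow] at this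
    exact congrArg Multiplicative.toAdd this
  have hschreier : baseVector (ψ f) = τ g + Pi.single g (Pi.single i 1) - τ (g * π (x i)) := by
    simp only [f, map_mul, map_inv, hψx]
    rw [baseVector_mul_wreathGen_mul_inv] <;> simp [hψπ, hy, τ]
  rw [show Pi.single g (Pi.single i 1) = baseVector (ψ f) - τ g + τ (g * π (x i)) by
    rw [hschreier]; abel]
  exact add_mem (sub_mem (mem_sup_left hf_invariant) (mem_sup_right (subset_span ⟨g, rfl⟩)))
    (mem_sup_right (subset_span ⟨_, rfl⟩))

end WreathRepresentation

theorem stmt_2_general (F : Type) [Group F] [TopologicalSpace F] [IsTopologicalGroup F]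
    (n : ℕ) (hn : 2 ≤ n) (hF : IsFreeProfiniteOfRank F n)
    (N : Subgroup F) [N.Normal] (hNopen : IsOpen (N : Set F))
    (α : F ≃* F)
    (hid : ∀ x ∈ N, α x = x) :
    ∀ x : F, α x = x := by
  obtain ⟨_, _, _, x, hx⟩ := hF
  by_contra! ⟨x₀, hx₀⟩
  set c := x₀⁻¹ * α x₀
  have hc : c ≠ 1 := fun h => hx₀ (inv_mul_eq_one.mp h).symm
  obtain ⟨V, hV⟩ := ProfiniteGrp.exist_openNormalSubgroup_sub_open_nhds_of_one
    (hNopen.inter isOpen_compl_singleton) ⟨N.one_mem, Ne.symm hc⟩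
  have : DiscreteTopology (F ⧸ V.toSubgroup) := QuotientGroup.discreteTopology V.isOpen'
  have : Finite (F ⧸ V.toSubgroup) := Subgroup.quotient_finite_of_isOpen _ V.isOpen'
  classical
  let π := QuotientGroup.mk' V.toSubgroup
  have hπ_open (s : Set (F ⧸ V.toSubgroup)) : IsOpen (π ⁻¹' s) :=
    (isOpen_discrete s).preimage continuous_quotient_mk'
  obtain ⟨ψ, ⟨hψ_open, hψx⟩, -⟩ :=
    hx (Multiplicative (Fin n → ZMod 2) ≀ᵣ (F ⧸ V.toSubgroup)) fun i => wreathGen (π (x i)) i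
  have hψπ : rightHom.comp ψ = π := (hx _ (π ∘ x)).unique
    ⟨fun s => hψ_open (rightHom ⁻¹' s), fun i => by simp [hψx, wreathGen]⟩ ⟨hπ_open, fun _ => rfl⟩
  have hcV : c ∈ Subgroup.centralizer π.ker := by
    rw [QuotientGroup.ker_mk']
    exact Subgroup.centralizer_le (fun v hv => (hV hv).1)
      (inv_mul_apply_mem_centralizer α.toMonoidHom hid x₀)
  have hn1 := card_le_one_of_mem_centralizer_ker π (QuotientGroup.mk'_surjective _) x ψ
    (fun f => DFunLike.congr_fun hψπ f) hψx hcV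
    (fun h => (hV ((QuotientGroup.eq_one_iff c).mp h)).2 rfl)
  rw [Nat.card_fin] at hn1
  omega

/-- A continuous automorphism of a free profinite group of finite rank `≥ 2` restricting to the
identity on an open normal subgroup is the identity. -/
theorem stmt_2 (F : Type) [Group F] [TopologicalSpace F] [IsTopologicalGroup F]
    (n : ℕ) (hn : 2 ≤ n) (hF : IsFreeProfiniteOfRank F n)
    (N : Subgroup F) [N.Normal] (hNopen : IsOpen (N : Set F))
    (α : F ≃* F) (hα : Continuous α) (hα' : Continuous α.symm)
    (hid : ∀ x ∈ N, α x = x) :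
    ∀ x : F, α x = x :=
  stmt_2_general F n hn hF N hNopen α hid
end

section
/- Let G be a profinite group, u ∈ G, and let ⟨u⟩ denote the closed procyclic subgroup generated by u. Suppose that for every n ∈ ℤ \ {0}, the normalizer in G of the closure of ⟨uⁿ⟩ equals ⟨u⟩. Let Aut_u(G) be the group of continuous automorphisms of G fixing u, let U be the conjugacy class of u in G, and let Out_U(G) be the stabilizer of U in Out(G). Then the natural homomorphism Aut_u(G)/Inn(⟨u⟩) → Out_U(G) is an isomorphism. -/
/-!
If `f` preserves the conjugacy class of `u`, then `f u = x u x⁻¹` and `f` followed by conjugation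
by `x⁻¹` fixes `u`. If conjugation by `x` fixes `u`, then `x` centralizes the closure of `⟨u⟩`
(centralizers are closed in a Hausdorff group), so it normalizes that closure, which is
self-normalizing.
-/

section ConjTwist

variable {G : Type*} [Group G]

lemma MulEquiv.trans_conj_inv_apply_eq_of_apply_eq (f : G ≃* G) {u x : G}
    (hx : f u = x * u * x⁻¹) : f.trans (MulAut.conj x⁻¹) u = u := by
  change x⁻¹ * f u * x⁻¹⁻¹ = u
  rw [hx]
  group

lemma MulEquiv.apply_eq_conj_trans_conj_inv (f : G ≃* G) (x y : G) :
    f y = x * f.trans (MulAut.conj x⁻¹) y * x⁻¹ := by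
  change f y = x * (x⁻¹ * f y * x⁻¹⁻¹) * x⁻¹
  group

variable [TopologicalSpace G] [ContinuousMul G]

lemma MulEquiv.continuous_trans_conj {f : G ≃* G} (hf : Continuous f) (x : G) :
    Continuous (f.trans (MulAut.conj x)) :=
  (continuous_const.mul hf).mul continuous_const

lemma MulEquiv.continuous_symm_trans_conj {f : G ≃* G} (hf : Continuous f.symm) (x : G) :
    Continuous (f.trans (MulAut.conj x)).symm :=
  hf.comp ((continuous_const.mul continuous_id).mul continuous_const)

end ConjTwist

section ProcyclicCentralizer

variable {G : Type*} [Group G] [TopologicalSpace G] [IsTopologicalGroup G] [T2Space G]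

lemma mem_centralizer_topologicalClosure_zpowers {u x : G} (hx : x * u * x⁻¹ = u) :
    x ∈ Subgroup.centralizer ((Subgroup.zpowers u).topologicalClosure : Set G) := by
  have hux : u ∈ Subgroup.centralizer {x} :=
    Subgroup.mem_centralizer_singleton_iff.2 (mul_inv_eq_iff_eq_mul.1 hx).symm
  have hle : (Subgroup.zpowers u).topologicalClosure ≤ Subgroup.centralizer {x} :=
    Subgroup.topologicalClosure_minimal _ (Subgroup.zpowers_le.2 hux)
      (Set.isClosed_centralizer _)
  exact Subgroup.mem_centralizer_iff.2 fun h hh =>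
    Subgroup.mem_centralizer_singleton_iff.1 (hle hh)

lemma mem_topologicalClosure_zpowers_of_conj_eq {u x : G}
    (hself : Subgroup.normalizer ((Subgroup.zpowers u).topologicalClosure : Set G)
      = (Subgroup.zpowers u).topologicalClosure)
    (hx : x * u * x⁻¹ = u) : x ∈ (Subgroup.zpowers u).topologicalClosure :=
  hself ▸ Subgroup.centralizer_le_normalizer _ (mem_centralizer_topologicalClosure_zpowers hx)

end ProcyclicCentralizer

theorem stmt_4_general (G : Type) [Group G] [TopologicalSpace G] [IsTopologicalGroup G]
    [T2Space G]
    (u : G)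
    (hself : ∀ n : ℤ, n ≠ 0 →
      Subgroup.normalizer ((Subgroup.zpowers (u ^ n)).topologicalClosure : Set G)
        = (Subgroup.zpowers u).topologicalClosure) :
    -- surjectivity onto `Out_U(G)`
    (∀ f : G ≃* G, Continuous f → Continuous f.symm →
        ((f : G → G) '' {g | ∃ x : G, x * u * x⁻¹ = g} = {g | ∃ x : G, x * u * x⁻¹ = g}) →
        ∃ (g : G ≃* G) (x : G), Continuous g ∧ Continuous g.symm ∧ g u = u ∧
          ∀ y : G, f y = x * g y * x⁻¹) ∧
    -- computation of the kernel: `Inn(⟨u⟩)`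
    (∀ f : G ≃* G, Continuous f → Continuous f.symm → f u = u →
        ((∃ x : G, ∀ y : G, f y = x * y * x⁻¹) ↔
          (∃ x ∈ (Subgroup.zpowers u).topologicalClosure, ∀ y : G, f y = x * y * x⁻¹))) := by
  refine ⟨fun f hf hfs hU => ?_, fun f _ _ hu => ⟨fun ⟨x, hx⟩ => ?_, fun ⟨x, _, hx⟩ => ⟨x, hx⟩⟩⟩
  · obtain ⟨x, hx⟩ : f u ∈ {g | ∃ x : G, x * u * x⁻¹ = g} := hU ▸ ⟨u, ⟨1, by group⟩, rfl⟩
    exact ⟨f.trans (MulAut.conj x⁻¹), x, MulEquiv.continuous_trans_conj hf _,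
      MulEquiv.continuous_symm_trans_conj hfs _,
      f.trans_conj_inv_apply_eq_of_apply_eq hx.symm, f.apply_eq_conj_trans_conj_inv x⟩
  · have hself₁ := hself 1 one_ne_zero
    rw [zpow_one] at hself₁
    exact ⟨x, mem_topologicalClosure_zpowers_of_conj_eq hself₁ (hx u ▸ hu), hx⟩

/-- Let `G` be a profinite group and `u ∈ G` such that the normalizer of the closed subgroup
generated by any nonzero power of `u` is the closed procyclic subgroup `⟨u⟩` generated by `u`.
Then the natural homomorphism `Aut_u(G)/Inn(⟨u⟩) → Out_U(G)` is an isomorphism, where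
`Aut_u(G)` is the group of continuous automorphisms fixing `u` and `Out_U(G)` is the stabilizer
in `Out(G)` of the conjugacy class `U` of `u`.  This is expressed below by: (1) surjectivity:
every continuous automorphism preserving the conjugacy class of `u` is, modulo an inner
automorphism, a continuous automorphism fixing `u`; (2) kernel: a continuous automorphism
fixing `u` is inner iff it is inner by an element of the closed subgroup generated by `u`. -/
theorem stmt_4 (G : Type) [Group G] [TopologicalSpace G] [IsTopologicalGroup G]
    [CompactSpace G] [T2Space G] [TotallyDisconnectedSpace G]
    (u : G)
    (hself : ∀ n : ℤ, n ≠ 0 →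
      Subgroup.normalizer ((Subgroup.zpowers (u ^ n)).topologicalClosure : Set G)
        = (Subgroup.zpowers u).topologicalClosure) :
    -- surjectivity onto `Out_U(G)`
    (∀ f : G ≃* G, Continuous f → Continuous f.symm →
        ((f : G → G) '' {g | ∃ x : G, x * u * x⁻¹ = g} = {g | ∃ x : G, x * u * x⁻¹ = g}) →
        ∃ (g : G ≃* G) (x : G), Continuous g ∧ Continuous g.symm ∧ g u = u ∧
          ∀ y : G, f y = x * g y * x⁻¹) ∧
    -- computation of the kernel: `Inn(⟨u⟩)`
    (∀ f : G ≃* G, Continuous f → Continuous f.symm → f u = u →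
        ((∃ x : G, ∀ y : G, f y = x * y * x⁻¹) ↔
          (∃ x ∈ (Subgroup.zpowers u).topologicalClosure, ∀ y : G, f y = x * y * x⁻¹))) :=
  stmt_4_general G u hself
end

section
/- Let X be a profinite set given as an inverse limit X = lim←_λ X_λ of finite sets on which a profinite group G acts continuously, and suppose a dense subgroup Γ ≤ G acts on a subset X₀ ⊆ X whose image in each X_λ is all of X_λ. If Γ has finitely many orbits on X₀, then G has finitely many orbits on X, each orbit of G on X is closed and open, and each G-orbit on X contains a point of X₀. -/
/-!
Every `G`-orbit is compact, hence closed, so the `G`-orbits of the finitely many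
representatives of the `Γ`-orbits on `X₀` form a closed set containing `X₀`. Since `X₀`
meets every fibre of every `π l`, a compactness argument over the directed system of fibres
shows that `X₀` is dense, so these finitely many orbits cover `X`. A finite partition into
closed sets is also a partition into open sets.
-/

open MulAction

theorem isClosed_orbit_of_continuous {G X : Type*} [Group G] [MulAction G X]
    [TopologicalSpace G] [CompactSpace G] [TopologicalSpace X] [T2Space X] {x : X}
    (hx : Continuous fun g : G => g • x) : IsClosed (orbit G x) :=
  (isCompact_range hx).isClosed

theorem isOpen_orbit_of_finite_cover {G X : Type*} [Group G] [MulAction G X]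
    [TopologicalSpace X] {F : Set X} (hF : F.Finite) (hcover : ∀ x, ∃ y ∈ F, x ∈ orbit G y)
    (hclosed : ∀ x : X, IsClosed (orbit G x)) (x : X) : IsOpen (orbit G x) := by
  have hcompl : (orbit G x)ᶜ = ⋃ y ∈ {y ∈ F | y ∉ orbit G x}, orbit G y := by
    ext z
    simp only [Set.mem_compl_iff, Set.mem_iUnion, Set.mem_ofPred_eq, exists_prop]
    constructor
    · intro hzx
      obtain ⟨y, hyF, hzy⟩ := hcover z
      refine ⟨y, ⟨hyF, fun hyx => hzx ?_⟩, hzy⟩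
      rwa [← orbit_eq_iff.mpr hyx]
    · rintro ⟨y, ⟨-, hyx⟩, hzy⟩ hzx
      exact hyx (orbit_eq_iff.mpr hzx ▸ mem_orbit_symm.mp hzy)
  rw [← isClosed_compl_iff, hcompl]
  exact (hF.sep _).isClosed_biUnion fun y _ => hclosed y

/-- The fibres `π l ⁻¹' {π l x}` shrink along `Λ` and, by `hsep`, meet only in `x`, so by
compactness a closed set meeting all of them contains `x`. -/
theorem dense_of_forall_exists_mem_fiber {X Λ : Type*} [TopologicalSpace X] [CompactSpace X]
    [Preorder Λ] [IsDirected Λ (· ≤ ·)] [Nonempty Λ] {Xl : Λ → Type*} {π : ∀ l, X → Xl l}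
    (hclosed : ∀ l a, IsClosed (π l ⁻¹' {a}))
    (hmono : ∀ ⦃l m⦄, l ≤ m → ∀ x y, π m x = π m y → π l x = π l y)
    (hsep : ∀ x y, (∀ l, π l x = π l y) → x = y)
    {X₀ : Set X} (hX₀ : ∀ l x, ∃ y ∈ X₀, π l y = π l x) : Dense X₀ := by
  refine dense_iff_closure_eq.2 (Set.eq_univ_of_forall fun x => ?_)
  set K : Λ → Set X := fun l => closure X₀ ∩ π l ⁻¹' {π l x}
  have hK_closed : ∀ l, IsClosed (K l) := fun l => isClosed_closure.inter (hclosed l _)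
  have hK_nonempty : ∀ l, (K l).Nonempty := fun l =>
    let ⟨y, hy, hyx⟩ := hX₀ l x
    ⟨y, subset_closure hy, hyx⟩
  have hK_directed : Directed (· ⊇ ·) K := fun l m =>
    let ⟨n, hln, hmn⟩ := directed_of (· ≤ ·) l m
    ⟨n, fun z hz => ⟨hz.1, hmono hln z x hz.2⟩, fun z hz => ⟨hz.1, hmono hmn z x hz.2⟩⟩
  obtain ⟨z, hz⟩ := IsCompact.nonempty_iInter_of_directed_nonempty_isCompact_isClosed K
    hK_directed hK_nonempty (fun l => (hK_closed l).isCompact) hK_closed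
  rw [Set.mem_iInter] at hz
  obtain rfl : z = x := hsep z x fun l => (hz l).2
  exact (hz (Classical.arbitrary Λ)).1

theorem stmt_18_general (G : Type) [Group G] [TopologicalSpace G]
    [CompactSpace G]
    (X : Type) [TopologicalSpace X] [CompactSpace X] [T2Space X]
    [MulAction G X]
    (hact : Continuous fun p : G × X => p.1 • p.2)
    (Λ : Type) [Preorder Λ] [IsDirected Λ (· ≤ ·)] [Nonempty Λ]
    (Xl : Λ → Type)
    (π : ∀ l, X → Xl l)
    (hπcont : ∀ (l : Λ) (s : Set (Xl l)), IsOpen (π l ⁻¹' s))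
    (hsep : ∀ x y : X, (∀ l, π l x = π l y) → x = y)
    (t : ∀ ⦃l m : Λ⦄, l ≤ m → Xl m → Xl l)
    (hcompat : ∀ ⦃l m : Λ⦄ (h : l ≤ m) (x : X), t h (π m x) = π l x)
    (Γ : Subgroup G)
    (X₀ : Set X)
    (hX₀surj : ∀ (l : Λ) (a : Xl l), ∃ x ∈ X₀, π l x = a)
    (horb : ∃ F : Set X, F.Finite ∧ F ⊆ X₀ ∧ ∀ x ∈ X₀, ∃ y ∈ F, ∃ γ ∈ Γ, γ • y = x) :
    (∃ F : Set X, F.Finite ∧ F ⊆ X₀ ∧ ∀ x : X, ∃ y ∈ F, ∃ g : G, g • y = x) ∧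
    ∀ x : X, IsClosed (MulAction.orbit G x : Set X) ∧ IsOpen (MulAction.orbit G x : Set X) := by
  obtain ⟨F, hFfin, hFsub, hF⟩ := horb
  have hclosed : ∀ x : X, IsClosed (orbit G x) := fun x =>
    isClosed_orbit_of_continuous (hact.comp (continuous_id.prodMk continuous_const))
  have hdense : Dense X₀ := dense_of_forall_exists_mem_fiber
    (fun l a => by simpa using (hπcont l {a}ᶜ).isClosed_compl)
    (fun l m hlm x y h => by rw [← hcompat hlm x, ← hcompat hlm y, h]) hsep
    (fun l x => hX₀surj l (π l x))
  have hX₀_sub : X₀ ⊆ ⋃ y ∈ F, orbit G y := fun x hx =>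
    let ⟨y, hyF, γ, _, hγy⟩ := hF x hx
    Set.mem_biUnion hyF ⟨γ, hγy⟩
  have hcover : ∀ x : X, ∃ y ∈ F, x ∈ orbit G y := by
    have h := closure_minimal hX₀_sub (hFfin.isClosed_biUnion fun y _ => hclosed y)
    rw [hdense.closure_eq] at h
    simpa using fun x => h (Set.mem_univ x)
  exact ⟨⟨F, hFfin, hFsub, hcover⟩,
    fun x => ⟨hclosed x, isOpen_orbit_of_finite_cover hFfin hcover hclosed x⟩⟩

/-- Let `X = lim← X_l` be a profinite set with a continuous action of a profinite group `G`,
`Γ` a dense subgroup of `G` acting on a subset `X₀ ⊆ X` whose image in each finite level `X_l`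
is all of `X_l`.  If `Γ` has finitely many orbits on `X₀`, then `G` has finitely many orbits
on `X`, each `G`-orbit is clopen, and each `G`-orbit contains a point of `X₀`. -/
theorem stmt_18 (G : Type) [Group G] [TopologicalSpace G] [IsTopologicalGroup G]
    [CompactSpace G] [T2Space G] [TotallyDisconnectedSpace G]
    (X : Type) [TopologicalSpace X] [CompactSpace X] [T2Space X]
    [TotallyDisconnectedSpace X] [MulAction G X]
    (hact : Continuous fun p : G × X => p.1 • p.2)
    (Λ : Type) [Preorder Λ] [IsDirected Λ (· ≤ ·)] [Nonempty Λ]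
    (Xl : Λ → Type) [∀ l, Finite (Xl l)]
    (π : ∀ l, X → Xl l)
    (hπcont : ∀ (l : Λ) (s : Set (Xl l)), IsOpen (π l ⁻¹' s))
    (hsep : ∀ x y : X, (∀ l, π l x = π l y) → x = y)
    (t : ∀ ⦃l m : Λ⦄, l ≤ m → Xl m → Xl l)
    (hcompat : ∀ ⦃l m : Λ⦄ (h : l ≤ m) (x : X), t h (π m x) = π l x)
    (Γ : Subgroup G) (hΓ : Dense (Γ : Set G))
    (X₀ : Set X) (hX₀inv : ∀ γ ∈ Γ, ∀ x ∈ X₀, γ • x ∈ X₀)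
    (hX₀surj : ∀ (l : Λ) (a : Xl l), ∃ x ∈ X₀, π l x = a)
    (horb : ∃ F : Set X, F.Finite ∧ F ⊆ X₀ ∧ ∀ x ∈ X₀, ∃ y ∈ F, ∃ γ ∈ Γ, γ • y = x) :
    (∃ F : Set X, F.Finite ∧ F ⊆ X₀ ∧ ∀ x : X, ∃ y ∈ F, ∃ g : G, g • y = x) ∧
    ∀ x : X, IsClosed (MulAction.orbit G x : Set X) ∧ IsOpen (MulAction.orbit G x : Set X) :=
  stmt_18_general G X hact Λ Xl π hπcont hsep t hcompat Γ X₀ hX₀surj horb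
end
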